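/- arXiv:2501.18115 — 4 statements merged into one kernel-verified Lean document; each statement's English description precedes it below -/
import Mathlib

section
/- Let r ≥ 1 and let p_1 ≤ … ≤ p_r be integers with p_i ≥ 2 for all i, and set N = p_1 + … + p_r. Let θ_1 ≤ … ≤ θ_N be the nondecreasing enumeration of the multiset consisting of the value 0 with multiplicity r together with, for each i = 1,…,r, the value p_i with multiplicity p_i − 1. Assume p_1 > p_{i+1} − p_i for every i = 1,…,r−1. Then θ_{r+1} − θ_r = p_1 and θ_{ℓ+1} − θ_ℓ < p_1 for every ℓ ∈ {1,…,N−1} with ℓ ≠ r; that is, ℓ = r is the unique maximizer of the consecutive gap ℓ ↦ θ_{ℓ+1} − θ_ℓ. -/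
lemma coe_flatten_map {α : Type*} {β : Type*} (l : List α) (f : α → List β) :
    (↑((l.map f).flatten) : Multiset β) = (l.map (fun a => (↑(f a) : Multiset β))).sum := by
  induction l with
  | nil => simp
  | cons a t ih => simp [ih, ← Multiset.coe_add]

/-- Gap statement for the sorted spectrum of the Laplacian of a disjoint union of
complete graphs of sizes `p 0 ≤ … ≤ p (r-1)`, each `≥ 2`: the sorted enumeration `θ`
of the multiset `{0 (×r)} ∪ {p i (×(p i - 1))}` has its unique largest consecutive
gap between the `r`-th and `(r+1)`-th entries, where it equals `p 0`. -/
theorem stmt6 (r : ℕ) (hr : 0 < r) (p : Fin r → ℕ) (hp2 : ∀ i, 2 ≤ p i)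
    (hmono : Monotone p)
    (hgap : ∀ i j : Fin r, (i : ℕ) + 1 = (j : ℕ) → p j - p i < p ⟨0, hr⟩)
    (N : ℕ) (hN : N = ∑ i, p i)
    (θ : ℕ → ℝ)
    (hθmono : ∀ k l, k ≤ l → l < N → θ k ≤ θ l)
    (henum : (Finset.range N).val.map θ =
      Multiset.replicate r (0 : ℝ) +
        ∑ i : Fin r, Multiset.replicate (p i - 1) ((p i : ℝ))) :
    θ r - θ (r - 1) = (p ⟨0, hr⟩ : ℝ) ∧
    (∀ ℓ : ℕ, 1 ≤ ℓ → ℓ ≤ N - 1 → ℓ ≠ r →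
      θ ℓ - θ (ℓ - 1) < (p ⟨0, hr⟩ : ℝ)) := by
  set i0 : Fin r := ⟨0, hr⟩ with hi0
  set blk : Fin r → List ℝ := fun i => List.replicate (p i - 1) ((p i : ℝ)) with hblk
  set B : List ℝ := ((List.finRange r).map blk).flatten with hB
  set L : List ℝ := List.replicate r (0 : ℝ) ++ B with hL
  have hp0 : 2 ≤ p i0 := hp2 i0
  -- lengths
  have hsum1 : ∑ i : Fin r, (p i - 1) = N - r := by
    have h1 : ∑ i : Fin r, (p i - 1) + ∑ _i : Fin r, 1 = ∑ i : Fin r, p i := by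
      rw [← Finset.sum_add_distrib]
      exact Finset.sum_congr rfl fun i _ => by have := hp2 i; omega
    simp only [Finset.sum_const, Finset.card_univ, Fintype.card_fin, smul_eq_mul, mul_one] at h1
    omega
  have hBlen : B.length = N - r := by
    simp only [hB, List.length_flatten, List.map_map]
    rw [show (List.length ∘ blk) = fun i => p i - 1 by funext i; simp [hblk]]
    rw [← Fin.sum_univ_def]
    exact hsum1
  have hrN : 2 * r ≤ N := by
    rw [hN]
    calc 2 * r = ∑ _i : Fin r, 2 := by simp [mul_comm]
    _ ≤ ∑ i, p i := Finset.sum_le_sum fun i _ => hp2 i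
  have hLlen : L.length = N := by
    rw [hL, List.length_append, List.length_replicate, hBlen]; omega
  -- multiset equality
  have hcoeL : (↑L : Multiset ℝ) =
      Multiset.replicate r (0 : ℝ) + ∑ i : Fin r, Multiset.replicate (p i - 1) ((p i : ℝ)) := by
    have hBcoe : (↑B : Multiset ℝ) = ∑ i : Fin r, Multiset.replicate (p i - 1) ((p i : ℝ)) := by
      rw [hB, coe_flatten_map, Fin.sum_univ_def]
      rfl
    rw [hL, ← Multiset.coe_add, Multiset.coe_replicate, hBcoe]
  -- the map list
  have hperm : ((List.range N).map θ).Perm L := by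
    rw [← Multiset.coe_eq_coe, hcoeL, ← henum]
    rfl
  -- sortedness of LHS
  have hsort1 : List.Pairwise (· ≤ ·) ((List.range N).map θ) := by
    rw [List.pairwise_iff_getElem]
    intro i j hi hj hij
    simp only [List.getElem_map, List.getElem_range]
    simp only [List.length_map, List.length_range] at hi hj
    exact hθmono i j hij.le hj
  -- sortedness of L
  have hmemB : ∀ x ∈ B, ∃ i : Fin r, x = (p i : ℝ) := by
    intro x hx
    simp only [hB, List.mem_flatten, List.mem_map] at hx
    obtain ⟨l, ⟨i, _, rfl⟩, hxl⟩ := hx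
    exact ⟨i, (List.eq_of_mem_replicate hxl)⟩
  have hsortB : List.Pairwise (· ≤ ·) B := by
    rw [hB, List.pairwise_flatten]
    constructor
    · intro l hl
      simp only [List.mem_map] at hl
      obtain ⟨i, _, rfl⟩ := hl
      exact List.pairwise_replicate.2 (Or.inr le_rfl)
    · rw [List.pairwise_map]
      refine (List.pairwise_lt_finRange r).imp ?_
      intro i j hij x hx y hy
      rw [List.eq_of_mem_replicate hx, List.eq_of_mem_replicate hy]
      exact_mod_cast hmono hij.le
  have hsortL : List.Pairwise (· ≤ ·) L := by
    rw [hL, List.pairwise_append]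
    refine ⟨List.pairwise_replicate.2 (Or.inr le_rfl), hsortB, ?_⟩
    intro x hx y hy
    rw [List.eq_of_mem_replicate hx]
    obtain ⟨i, rfl⟩ := hmemB y hy
    positivity
  have hEq : (List.range N).map θ = L := List.Perm.eq_of_pairwise' hsort1 hsortL hperm
  -- θ k = L[k]
  have hθeq : ∀ k (hk : k < N), θ k = L[k]'(hLlen ▸ hk) := by
    intro k hk
    have : ((List.range N).map θ)[k]'(by simpa using hk) = L[k]'(hLlen ▸ hk) := by
      congr 1
    simpa using this
  -- entries: zeros
  have hzero : ∀ k, k < r → θ k = 0 := by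
    intro k hk
    have hkN : k < N := by omega
    rw [hθeq k hkN]
    simp only [hL]
    rw [List.getElem_append_left (by simpa using hk)]
    simp
  -- entries past r
  have hpast : ∀ k (hk1 : r ≤ k) (hk2 : k < N), θ k = B[k - r]'(by omega) := by
    intro k hk1 hk2
    rw [hθeq k hk2]
    simp only [hL]
    rw [List.getElem_append_right (by simpa using hk1)]
    simp
  -- B[0] = p 0
  have hB0 : B[0]'(by omega) = (p i0 : ℝ) := by
    obtain ⟨r', rfl⟩ : ∃ r', r = r' + 1 := ⟨r - 1, by omega⟩
    simp only [hB, List.finRange_succ, List.map_cons, List.flatten_cons]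
    rw [List.getElem_append_left (by simp [hblk]; have := hp2 0; omega)]
    simp only [hblk, List.getElem_replicate]
    rfl
  -- junction helper
  have hjun : ∀ (i j : Fin r), (i : ℕ) + 1 = (j : ℕ) →
      ∀ x ∈ (blk i).getLast?, ∀ y ∈ (blk j).head?, y - x < (p i0 : ℝ) := by
    intro i j hij x hx y hy
    have hx' : x = (p i : ℝ) := List.eq_of_mem_replicate (List.mem_of_mem_getLast? hx)
    have hy' : y = (p j : ℝ) := List.eq_of_mem_replicate (List.mem_of_mem_head? hy)
    subst hx' hy'
    have h1 := hgap i j hij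
    have h2 : p i ≤ p j := hmono (by rw [Fin.le_def]; omega)
    have h3 : p j < p i0 + p i := by omega
    rw [sub_lt_iff_lt_add]
    exact_mod_cast h3
  -- chain for B
  have hchain : List.IsChain (fun a b => b - a < (p i0 : ℝ)) B := by
    rw [hB, List.isChain_flatten (by
      intro hmem
      simp only [List.mem_map] at hmem
      obtain ⟨i, -, hi⟩ := hmem
      have h2 := hp2 i
      have h3 : (blk i).length = 0 := by rw [hi]; rfl
      simp only [hblk, List.length_replicate] at h3
      omega)]
    constructor
    · intro l hl
      simp only [List.mem_map] at hl
      obtain ⟨i, -, rfl⟩ := hl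
      simp only [hblk]
      rw [List.isChain_iff_getElem]
      intro k hk
      simp only [List.get_eq_getElem, List.getElem_replicate, sub_self]
      have h2 : (0 : ℕ) < p i0 := by omega
      exact_mod_cast h2
    · rw [List.isChain_map, List.isChain_iff_getElem]
      intro k hk
      simp only [List.length_finRange] at hk
      apply hjun
      simp [List.getElem_finRange]
  -- gap via chain
  have hgapB : ∀ m (hm : m + 1 < B.length), B[m + 1]'hm - B[m]'(by omega) < (p i0 : ℝ) := by
    intro m hm
    have := List.isChain_iff_getElem.1 hchain m (by omega)
    simpa using this
  have hgapB' : ∀ m n (_h : m + 1 = n) (hn : n < B.length),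
      B[n]'hn - B[m]'(by omega) < (p i0 : ℝ) := by
    intro m n h hn
    subst h
    exact hgapB m hn
  constructor
  · have h1 : θ (r - 1) = 0 := hzero (r - 1) (by omega)
    have h2 : θ r = B[r - r]'(by omega) := hpast r le_rfl (by omega)
    rw [h1, h2, sub_zero]
    have : r - r = 0 := by omega
    simp only [this]
    exact hB0
  · intro ℓ h1 h2 h3
    rcases lt_or_gt_of_ne h3 with hlt | hgt
    · have hpos : (0 : ℝ) < (p i0 : ℝ) := by exact_mod_cast (by omega : (0 : ℕ) < p i0)
      rw [hzero ℓ hlt, hzero (ℓ - 1) (by omega)]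
      simpa using hpos
    · have hℓN : ℓ < N := by omega
      have hA : θ ℓ = B[ℓ - r]'(by omega) := hpast ℓ (by omega) hℓN
      have hA' : θ (ℓ - 1) = B[ℓ - 1 - r]'(by omega) := hpast (ℓ - 1) (by omega) (by omega)
      rw [hA, hA']
      exact hgapB' (ℓ - 1 - r) (ℓ - r) (by omega) (by omega)
end

section
/- Let G be a finite simple graph that is the disjoint union of r complete graphs whose numbers of vertices, listed in nondecreasing order, are 2 ≤ p_1 ≤ … ≤ p_r and satisfy p_1 > p_{i+1} − p_i for every i = 1,…,r−1. Let θ_1 ≤ … ≤ θ_N (N = p_1 + … + p_r) denote the eigenvalues of the graph Laplacian L(G) in nondecreasing order, counted with multiplicity. Then θ_r = 0 < θ_{r+1} = p_1, and ℓ = r is the unique maximizer over ℓ ∈ {1,…,N−1} of the gap θ_{ℓ+1} − θ_ℓ. In particular, the estimator r̂ = argmax_{1≤ℓ≤N−1} (θ_{ℓ+1} − θ_ℓ) recovers the number r of complete components. -/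
open Matrix Polynomial in
private lemma detAux7 {n : Type*} [Fintype n] [DecidableEq n] (hn : 0 < Fintype.card n)
    {a : ℝ} (ha : a ≠ 0) :
    (Matrix.of fun i j : n => (if i = j then a else 0) + 1).det
      = a ^ (Fintype.card n - 1) * (a + Fintype.card n) := by
  have h1 : (Matrix.of fun i j : n => (if i = j then a else 0) + 1)
      = a • (1 + Matrix.replicateCol Unit (fun _ : n => a⁻¹) * Matrix.replicateRow Unit (fun _ : n => (1:ℝ))) := by
    ext i j
    by_cases h : i = j <;>
      simp [h, Matrix.mul_apply, Matrix.one_apply, Fintype.sum_unique, mul_add,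
        mul_inv_cancel₀ ha]
  rw [h1, Matrix.det_smul, Matrix.det_one_add_replicateCol_mul_replicateRow]
  have h2 : (fun _ : n => (1:ℝ)) ⬝ᵥ (fun _ => a⁻¹) = (Fintype.card n : ℝ) * a⁻¹ := by
    simp [dotProduct, Finset.card_univ]
  rw [h2]
  obtain ⟨c, hc⟩ : ∃ c, Fintype.card n = c + 1 :=
    ⟨Fintype.card n - 1, (Nat.succ_pred_eq_of_pos hn).symm⟩
  rw [hc]
  simp only [Nat.add_sub_cancel]
  field_simp
  ring

open Polynomial in
private lemma evalCharpoly7 {V : Type*} [Fintype V] [DecidableEq V] (M : Matrix V V ℝ) (x : ℝ) :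
    (M.charpoly).eval x = (Matrix.of fun u v => (if u = v then x else 0) - M u v).det := by
  have : (Polynomial.evalRingHom x) (M.charpoly)
      = ((M.charmatrix).map (Polynomial.evalRingHom x)).det := by
    rw [Matrix.charpoly, RingHom.map_det, RingHom.mapMatrix_apply]
  rw [show (M.charpoly).eval x = (Polynomial.evalRingHom x) (M.charpoly) from rfl, this]
  congr 1
  ext u v
  by_cases h : u = v
  · subst h; simp
  · rw [Matrix.map_apply, Matrix.charmatrix_apply_ne _ _ _ h]; simp [h]

/-- For a disjoint union of complete graphs on the fibers of `σ`, with fiber sizes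
`p i ≥ 2` nondecreasing and satisfying `p 0 > p (i+1) - p i`, the nondecreasing
enumeration `θ` of the Laplacian spectrum satisfies `θ_r = 0 < θ_{r+1} = p 0`
(0-based: `θ (r-1) = 0`, `θ r = p 0`), and the consecutive gap is uniquely maximised
at position `r`; hence the spectral-gap estimator recovers `r`. -/
theorem stmt7 (r : ℕ) (hr : 0 < r) (V : Type*) [Fintype V] [DecidableEq V]
    (σ : V → Fin r) (hσ : Function.Surjective σ)
    (G : SimpleGraph V) [DecidableRel G.Adj]
    (hG : ∀ u v, G.Adj u v ↔ u ≠ v ∧ σ u = σ v)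
    (p : Fin r → ℕ) (hp : ∀ i, p i = Fintype.card {v : V // σ v = i})
    (hp2 : ∀ i, 2 ≤ p i) (hmono : Monotone p)
    (hgap : ∀ i j : Fin r, (i : ℕ) + 1 = (j : ℕ) → p j - p i < p ⟨0, hr⟩)
    (N : ℕ) (hN : N = Fintype.card V)
    (θ : ℕ → ℝ)
    (hθmono : ∀ k l, k ≤ l → l < N → θ k ≤ θ l)
    (henum : (Finset.range N).val.map θ = (G.lapMatrix ℝ).charpoly.roots) :
    (θ (r - 1) = 0 ∧ θ r = (p ⟨0, hr⟩ : ℝ)) ∧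
    (∀ ℓ : ℕ, 1 ≤ ℓ → ℓ ≤ N - 1 → ℓ ≠ r →
      θ ℓ - θ (ℓ - 1) < θ r - θ (r - 1)) := by
  classical
  open Polynomial Matrix in
  set z : Fin r := ⟨0, hr⟩ with hz
  -- fiber cardinalities
  have hfib : ∀ i, (Finset.univ.filter (fun u => σ u = i)).card = p i := by
    intro i; rw [hp i, Fintype.card_subtype]
  -- degrees
  have hdeg : ∀ v, G.degree v = p (σ v) - 1 := by
    intro v
    have hnb : G.neighborFinset v = (Finset.univ.filter (fun u => σ u = σ v)).erase v := by
      ext u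
      simp only [SimpleGraph.mem_neighborFinset, hG, Finset.mem_erase, Finset.mem_filter,
        Finset.mem_univ, true_and]
      exact ⟨fun h => ⟨Ne.symm h.1, h.2.symm⟩, fun h => ⟨Ne.symm h.1, h.2.symm⟩⟩
    rw [SimpleGraph.degree, hnb, Finset.card_erase_of_mem (by simp), hfib]
  -- the characteristic polynomial
  have hp1 : ∀ i, 1 ≤ p i := fun i => le_trans one_le_two (hp2 i)
  set P : Polynomial ℝ := ∏ i : Fin r, ((X - C (p i : ℝ))^(p i - 1) * X) with hP
  have hcp : (G.lapMatrix ℝ).charpoly = P := by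
    apply Polynomial.eq_of_infinite_eval_eq
    apply Set.Infinite.mono (s := (Set.range fun i => (p i : ℝ))ᶜ)
    swap
    · exact Set.Finite.infinite_compl (Set.finite_range _)
    intro x hx
    simp only [Set.mem_compl_iff, Set.mem_range, not_exists] at hx
    have hx' : ∀ i, x ≠ (p i : ℝ) := fun i h => hx i h.symm
    simp only [Set.mem_setOf_eq]
    rw [evalCharpoly7]
    set B : Matrix V V ℝ := Matrix.of fun u v => (if u = v then x else 0) - (G.lapMatrix ℝ) u v
      with hB
    have hBentry : ∀ u v, B u v =
        if σ u = σ v then ((if u = v then (x - (p (σ u) : ℝ)) else 0) + 1) else 0 := by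
      intro u v
      simp only [hB, Matrix.of_apply, SimpleGraph.lapMatrix, Matrix.sub_apply,
        SimpleGraph.degMatrix, Matrix.diagonal_apply, SimpleGraph.adjMatrix_apply]
      by_cases h : u = v
      · subst h
        rw [hdeg u]
        have : ((p (σ u) - 1 : ℕ) : ℝ) = (p (σ u) : ℝ) - 1 := by
          have := hp1 (σ u); push_cast [this]; ring
        simp [this]
        ring
      · have : ¬ G.Adj u u := G.irrefl
        by_cases hs : σ u = σ v
        · simp [h, hs, hG, (hG u v).mpr ⟨h, hs⟩]
        · have : ¬ G.Adj u v := fun ha => hs ((hG u v).mp ha).2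
          simp [h, hs, this]
    have hBT : B.BlockTriangular σ := by
      intro u v hlt
      rw [hBentry, if_neg (fun h : σ u = σ v => absurd h.symm (ne_of_lt hlt))]
    rw [hBT.det_fintype]
    have hblock : ∀ k : Fin r, (B.toSquareBlock σ k).det
        = x * (x - (p k : ℝ))^(p k - 1) := by
      intro k
      have hcard : Fintype.card {v : V // σ v = k} = p k := (hp k).symm
      have hcard' : 0 < Fintype.card {v : V // σ v = k} := by
        have := hp2 k; omega
      have : B.toSquareBlock σ k
          = Matrix.of fun i j : {v : V // σ v = k} =>
              (if i = j then (x - (p k : ℝ)) else 0) + 1 := by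
        ext i j
        rw [Matrix.toSquareBlock_def]
        simp only [Matrix.of_apply]
        rw [hBentry]
        have h1 : σ (i : V) = σ (j : V) := by rw [i.prop, j.prop]
        have h2 : ((i : V) = (j : V)) ↔ i = j := Subtype.coe_inj
        rw [if_pos h1, i.prop]
        by_cases h : i = j
        · simp [h]
        · rw [if_neg (fun hc => h (h2.mp hc)), if_neg h]
      rw [this, detAux7 hcard' (sub_ne_zero.mpr (hx' k)), hcard]
      ring_nf
    rw [Finset.prod_congr rfl (fun k _ => hblock k)]
    rw [hP]
    rw [Polynomial.eval_prod]
    apply Finset.prod_congr rfl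
    intro k _
    simp [Polynomial.eval_pow]
    ring
  -- roots of P
  set M : Multiset ℝ := ∑ i : Fin r, (Multiset.replicate (p i - 1) ((p i : ℝ)) + {0}) with hM
  have hPne : ∀ i : Fin r, ((X - C ((p i : ℝ)))^(p i - 1) * X) ≠ 0 := by
    intro i
    apply mul_ne_zero
    · exact pow_ne_zero _ (X_sub_C_ne_zero _)
    · exact X_ne_zero
  have hroots : P.roots = M := by
    rw [hP, Polynomial.roots_prod _ _ (by
      rw [Finset.prod_ne_zero_iff]; exact fun i _ => hPne i)]
    have : ∀ i : Fin r, ((X - C ((p i : ℝ)))^(p i - 1) * X).roots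
        = Multiset.replicate (p i - 1) ((p i : ℝ)) + {0} := by
      intro i
      rw [Polynomial.roots_mul (mul_ne_zero (pow_ne_zero _ (X_sub_C_ne_zero _)) X_ne_zero),
        Polynomial.roots_pow, Polynomial.roots_X_sub_C, Polynomial.roots_X,
        Multiset.nsmul_singleton]
    rw [Multiset.bind_congr (fun i _ => this i), hM, Finset.sum_eq_multiset_sum]
    rfl
  have hMθ : (Finset.range N).val.map θ = M := by rw [henum, hcp, hroots]
  -- basic facts about M
  have hpz2 : (2:ℝ) ≤ (p z : ℝ) := by exact_mod_cast hp2 z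
  have hcount0 : M.count 0 = r := by
    rw [hM, ← Multiset.coe_countAddMonoidHom, map_sum]
    have : ∀ i : Fin r,
        (Multiset.countAddMonoidHom (0:ℝ)) (Multiset.replicate (p i - 1) ((p i : ℝ)) + {0})
          = 1 := by
      intro i
      have hne : ((p i : ℝ)) ≠ 0 := by
        have := hp2 i
        exact_mod_cast (by omega : p i ≠ 0)
      simp [Multiset.coe_countAddMonoidHom, Multiset.count_replicate, hne]
    rw [Finset.sum_congr rfl (fun i _ => this i)]
    simp
  have hmemM : ∀ x ∈ M, x = 0 ∨ ∃ i, x = (p i : ℝ) := by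
    intro x hx
    rw [hM, Multiset.mem_sum] at hx
    obtain ⟨i, _, hi⟩ := hx
    rw [Multiset.mem_add] at hi
    rcases hi with hi | hi
    · exact Or.inr ⟨i, (Multiset.eq_of_mem_replicate hi)⟩
    · exact Or.inl (Multiset.mem_singleton.mp hi)
  have hmemp : ∀ i, (p i : ℝ) ∈ M := by
    intro i
    rw [hM, Multiset.mem_sum]
    refine ⟨i, Finset.mem_univ i, ?_⟩
    rw [Multiset.mem_add]
    left
    rw [Multiset.mem_replicate]
    have := hp2 i
    exact ⟨by omega, rfl⟩
  have hcountP : r + 1 ≤ M.countP (fun x => x ≤ (p z : ℝ)) := by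
    rw [hM, ← Multiset.coe_countPAddMonoidHom, map_sum]
    have hone : ∀ i : Fin r, 1 ≤ (Multiset.countPAddMonoidHom (fun x => x ≤ (p z : ℝ)))
        (Multiset.replicate (p i - 1) ((p i : ℝ)) + {0}) := by
      intro i
      rw [Multiset.coe_countPAddMonoidHom, Multiset.countP_add]
      have : 0 < Multiset.countP (fun x => x ≤ (p z : ℝ)) ({0} : Multiset ℝ) := by
        rw [Multiset.countP_pos]
        exact ⟨0, Multiset.mem_singleton_self 0, by positivity⟩
      omega
    have htwo : 2 ≤ (Multiset.countPAddMonoidHom (fun x => x ≤ (p z : ℝ)))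
        (Multiset.replicate (p z - 1) ((p z : ℝ)) + {0}) := by
      rw [Multiset.coe_countPAddMonoidHom, Multiset.countP_add]
      have h1 : 0 < Multiset.countP (fun x => x ≤ (p z : ℝ)) ({0} : Multiset ℝ) := by
        rw [Multiset.countP_pos]
        exact ⟨0, Multiset.mem_singleton_self 0, by positivity⟩
      have h2 : 0 < Multiset.countP (fun x => x ≤ (p z : ℝ))
          (Multiset.replicate (p z - 1) ((p z : ℝ))) := by
        rw [Multiset.countP_pos]
        refine ⟨(p z : ℝ), ?_, le_refl _⟩
        rw [Multiset.mem_replicate]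
        have := hp2 z
        exact ⟨by omega, rfl⟩
      omega
    calc r + 1 = 2 + (Finset.univ.erase z).card • 1 := by
          rw [Finset.card_erase_of_mem (Finset.mem_univ z), Finset.card_univ,
            Fintype.card_fin]
          simp only [smul_eq_mul, mul_one]
          omega
      _ ≤ (Multiset.countPAddMonoidHom (fun x => x ≤ (p z : ℝ)))
            (Multiset.replicate (p z - 1) ((p z : ℝ)) + {0})
          + ∑ i ∈ Finset.univ.erase z,
            (Multiset.countPAddMonoidHom (fun x => x ≤ (p z : ℝ)))
            (Multiset.replicate (p i - 1) ((p i : ℝ)) + {0}) :=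
          add_le_add htwo (Finset.card_nsmul_le_sum _ _ _ (fun i _ => hone i))
      _ = _ := Finset.add_sum_erase _ (fun i => (Multiset.countPAddMonoidHom
            (fun x => x ≤ (p z : ℝ)))
            (Multiset.replicate (p i - 1) ((p i : ℝ)) + {0})) (Finset.mem_univ z)
  -- size of N
  have hNsum : N = ∑ i : Fin r, p i := by
    rw [hN, ← Fintype.card_congr (Equiv.sigmaFiberEquiv σ), Fintype.card_sigma]
    exact Finset.sum_congr rfl (fun i _ => (hp i).symm)
  have hrN : r + 1 ≤ N := by
    have h2 : ∑ i : Fin r, 2 ≤ ∑ i : Fin r, p i := Finset.sum_le_sum (fun i _ => hp2 i)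
    simp only [Finset.sum_const, Finset.card_univ, Fintype.card_fin, smul_eq_mul] at h2
    omega
  -- θ facts
  have hθmem : ∀ k, k < N → θ k ∈ M := by
    intro k hk
    rw [← hMθ]
    exact Multiset.mem_map_of_mem _ (by simpa using hk)
  have hθnn : ∀ k, k < N → 0 ≤ θ k := by
    intro k hk
    rcases hmemM _ (hθmem k hk) with h | ⟨i, h⟩
    · exact h.ge
    · rw [h]; positivity
  have hfilter0 : (Finset.filter (fun k => (0:ℝ) = θ k) (Finset.range N)).card = r := by
    have h := hMθ ▸ hcount0
    rw [Multiset.count_map] at h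
    rw [Finset.card_def, Finset.filter_val]
    exact h
  have hθr_ne : θ r ≠ 0 := by
    intro h
    have hsub : Finset.range (r+1) ⊆ Finset.filter (fun k => (0:ℝ) = θ k) (Finset.range N) := by
      intro k hk
      rw [Finset.mem_range] at hk
      rw [Finset.mem_filter, Finset.mem_range]
      have hkN : k < N := by omega
      refine ⟨hkN, le_antisymm (hθnn k hkN) ?_⟩
      calc θ k ≤ θ r := hθmono k r (by omega) (by omega)
        _ = 0 := h
    have := Finset.card_le_card hsub
    rw [hfilter0, Finset.card_range] at this
    omega
  have hθ0r : θ (r-1) = 0 := by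
    by_contra h
    have hpos : 0 < θ (r-1) := lt_of_le_of_ne (hθnn (r-1) (by omega)) (Ne.symm h)
    have hsub : Finset.filter (fun k => (0:ℝ) = θ k) (Finset.range N)
        ⊆ Finset.range (r-1) := by
      intro k hk
      rw [Finset.mem_filter, Finset.mem_range] at hk
      rw [Finset.mem_range]
      by_contra hge
      have : θ (r-1) ≤ θ k := hθmono (r-1) k (by omega) hk.1
      rw [← hk.2] at this
      exact absurd this (not_le.mpr hpos)
    have := Finset.card_le_card hsub
    rw [hfilter0, Finset.card_range] at this
    omega
  have hθzero : ∀ k, k ≤ r - 1 → θ k = 0 := by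
    intro k hk
    refine le_antisymm ?_ (hθnn k (by omega))
    calc θ k ≤ θ (r-1) := hθmono k (r-1) hk (by omega)
      _ = 0 := hθ0r
  have hθrp : θ r = (p z : ℝ) := by
    have hge : (p z : ℝ) ≤ θ r := by
      rcases hmemM _ (hθmem r (by omega)) with h | ⟨i, h⟩
      · exact absurd h hθr_ne
      · rw [h]
        exact_mod_cast hmono (by simp [hz, Fin.le_def])
    have hle : θ r ≤ (p z : ℝ) := by
      by_contra hgt
      push_neg at hgt
      have hsub : Finset.filter (fun k => θ k ≤ (p z : ℝ)) (Finset.range N)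
          ⊆ Finset.range r := by
        intro k hk
        rw [Finset.mem_filter, Finset.mem_range] at hk
        rw [Finset.mem_range]
        by_contra hge'
        have : θ r ≤ θ k := hθmono r k (by omega) hk.1
        exact absurd (le_trans this hk.2) (not_le.mpr hgt)
      have hcard : r + 1 ≤ (Finset.filter (fun k => θ k ≤ (p z : ℝ)) (Finset.range N)).card := by
        rw [Finset.card_def, Finset.filter_val, ← Multiset.countP_eq_card_filter]
        have := hMθ ▸ hcountP
        rw [Multiset.countP_map] at this
        rw [Multiset.countP_eq_card_filter]
        exact this
      have := Finset.card_le_card hsub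
      rw [Finset.card_range] at this
      omega
    exact le_antisymm hle hge
  refine ⟨⟨hθ0r, hθrp⟩, ?_⟩
  intro ℓ hℓ1 hℓN hℓr
  rw [hθ0r, hθrp, sub_zero]
  have hℓN' : ℓ < N := by omega
  rcases lt_or_gt_of_ne hℓr with hlt | hgt
  · rw [hθzero ℓ (by omega), hθzero (ℓ-1) (by omega), sub_zero]
    linarith
  · have hl1N : ℓ - 1 < N := by omega
    have hθl1 : (p z : ℝ) ≤ θ (ℓ-1) := hθrp ▸ hθmono r (ℓ-1) (by omega) hl1N
    have hθl1ne : θ (ℓ-1) ≠ 0 := by intro h; rw [h] at hθl1; linarith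
    obtain ⟨i, hi⟩ : ∃ i, θ (ℓ-1) = (p i : ℝ) := by
      rcases hmemM _ (hθmem (ℓ-1) hl1N) with h | h
      · exact absurd h hθl1ne
      · exact h
    obtain ⟨j, hj⟩ : ∃ j, θ ℓ = (p j : ℝ) := by
      rcases hmemM _ (hθmem ℓ hℓN') with h | h
      · exfalso
        have hm := hθmono (ℓ-1) ℓ (by omega) hℓN'
        rw [h] at hm
        linarith
      · exact h
    by_cases hij : p i = p j
    · rw [hi, hj, hij, sub_self]
      linarith
    · have hij' : p i < p j := by
        have hm : θ (ℓ-1) ≤ θ ℓ := hθmono (ℓ-1) ℓ (by omega) hℓN'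
        rw [hi, hj] at hm
        have := Nat.cast_le (α := ℝ) |>.mp hm
        omega
      set s : Finset (Fin r) := Finset.univ.filter (fun t => p t = p i) with hs
      have hsne : s.Nonempty := ⟨i, by simp [hs]⟩
      set i' : Fin r := s.max' hsne with hi'
      have hpi' : p i' = p i := by
        have hmem := s.max'_mem hsne
        exact (Finset.mem_filter.mp hmem).2
      have hi'j : i' < j := by
        by_contra h
        push_neg at h
        have := hmono h
        omega
      have hi'jn : (i' : ℕ) < (j : ℕ) := hi'j
      have hjr : ((i' : ℕ) + 1) < r := by
        have := j.isLt
        omega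
      set i'' : Fin r := ⟨(i' : ℕ) + 1, hjr⟩ with hi''
      have hg := hgap i' i'' rfl
      have hle1 : p i' ≤ p i'' := hmono (Fin.le_def.mpr (by rw [hi'']; simp))
      have hlt2 : p i < p i'' := by
        rcases lt_or_eq_of_le (hpi' ▸ hle1) with h | h
        · exact h
        · exfalso
          have hmem : i'' ∈ s := Finset.mem_filter.mpr ⟨Finset.mem_univ _, by omega⟩
          have hle := s.le_max' i'' hmem
          rw [← hi'] at hle
          have h1 : (i'' : ℕ) ≤ (i' : ℕ) := Fin.le_def.mp hle
          rw [hi''] at h1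
          simp at h1
      have hle3 : p i'' ≤ p j := hmono (Fin.le_def.mpr (by simp [hi'']; omega))
      have hnm : ∀ x ∈ M, x ≤ θ (ℓ-1) ∨ θ ℓ ≤ x := by
        intro x hx
        rw [← hMθ] at hx
        obtain ⟨k, hk, rfl⟩ := Multiset.mem_map.mp hx
        have hkN : k < N := by simpa using hk
        by_cases hkl : k ≤ ℓ - 1
        · exact Or.inl (hθmono k (ℓ-1) hkl hl1N)
        · exact Or.inr (hθmono ℓ k (by omega) hkN)
      have hbetween := hnm _ (hmemp i'')
      rw [hi, hj] at hbetween
      have hpj : p i'' = p j := by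
        rcases hbetween with h | h
        · exfalso
          have := Nat.cast_le (α := ℝ) |>.mp h
          omega
        · have := Nat.cast_le (α := ℝ) |>.mp h
          omega
      rw [hi, hj, ← hpj, ← hpi', ← Nat.cast_sub hle1]
      exact_mod_cast hg
end

section
/- Let n_1, n_2 ≥ 1 and n = n_1 + n_2, and let x_1, …, x_n ∈ ℝ. Suppose there exist b_1, b_2 ∈ ℝ and η ≥ 0 with |b_1 − b_2| ≥ 2η such that |x_ℓ − b_1| ≤ η for all ℓ ∈ {1,…,n_1} and |x_ℓ − b_2| ≤ η for all ℓ ∈ {n_1+1,…,n}. Then, writing x̄ = (1/n) Σ_{ℓ=1}^n x_ℓ, one has (1/n) Σ_{ℓ=1}^n (x_ℓ − x̄)² ≥ (n_1 n_2 / n²) · (|b_1 − b_2| − 2η)². -/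
/-- Variance lower bound for two well-separated groups merged into one cluster:
if the first `n₁` points lie within `η` of `b₁` and the remaining `n₂` within `η`
of `b₂`, with `|b₁ - b₂| ≥ 2η`, then the empirical variance is at least
`(n₁ n₂ / n²) (|b₁ - b₂| - 2η)²`. -/
theorem stmt9 (n₁ n₂ : ℕ) (h₁ : 1 ≤ n₁) (h₂ : 1 ≤ n₂) (n : ℕ) (hn : n = n₁ + n₂)
    (x : Fin n → ℝ) (b₁ b₂ : ℝ) (η : ℝ) (hη : 0 ≤ η) (hsep : 2 * η ≤ |b₁ - b₂|)
    (hx1 : ∀ ℓ : Fin n, (ℓ : ℕ) < n₁ → |x ℓ - b₁| ≤ η)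
    (hx2 : ∀ ℓ : Fin n, n₁ ≤ (ℓ : ℕ) → |x ℓ - b₂| ≤ η) :
    ((n₁ : ℝ) * n₂ / (n : ℝ) ^ 2) * (|b₁ - b₂| - 2 * η) ^ 2 ≤
      (1 / (n : ℝ)) * ∑ ℓ, (x ℓ - (1 / (n : ℝ)) * ∑ m, x m) ^ 2 := by
  have hnpos : 0 < n := by omega
  have hn0 : (0 : ℝ) < (n : ℝ) := by exact_mod_cast hnpos
  set D : ℝ := |b₁ - b₂| - 2 * η with hD
  have hD0 : 0 ≤ D := by simp [hD]; linarith
  -- pairwise lower bound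
  have pair : ∀ ℓ k : Fin n, (ℓ : ℕ) < n₁ → n₁ ≤ (k : ℕ) →
      D ^ 2 ≤ (x ℓ - x k) ^ 2 := by
    intro ℓ k hℓ hk
    have h1 := hx1 ℓ hℓ
    have h2 := hx2 k hk
    have habs : D ≤ |x ℓ - x k| := by
      have tri : |b₁ - b₂| ≤ |b₁ - x ℓ| + |x ℓ - x k| + |x k - b₂| := by
        have := abs_sub_le (b₁) (x ℓ) (b₂)
        have := abs_sub_le (x ℓ) (x k) (b₂)
        calc |b₁ - b₂| ≤ |b₁ - x ℓ| + |x ℓ - b₂| := abs_sub_le _ _ _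
          _ ≤ |b₁ - x ℓ| + (|x ℓ - x k| + |x k - b₂|) := by
              linarith [abs_sub_le (x ℓ) (x k) b₂]
          _ = _ := by ring
      rw [abs_sub_comm b₁ (x ℓ)] at tri
      simp only [hD]; linarith
    calc D ^ 2 ≤ |x ℓ - x k| ^ 2 := by
          exact pow_le_pow_left₀ hD0 habs 2
      _ = (x ℓ - x k) ^ 2 := sq_abs _
  -- the two groups
  set G1 : Finset (Fin n) := Finset.univ.filter (fun ℓ => (ℓ : ℕ) < n₁) with hG1
  set G2 : Finset (Fin n) := Finset.univ.filter (fun ℓ => ¬ (ℓ : ℕ) < n₁) with hG2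
  have hn₁lt : n₁ < n := by omega
  have cardG1 : G1.card = n₁ := by
    have : G1 = Finset.Iio (⟨n₁, hn₁lt⟩ : Fin n) := by
      ext ℓ
      simp [hG1, Finset.mem_Iio, Fin.lt_def]
    rw [this, Fin.card_Iio]
  have cardG2 : G2.card = n₂ := by
    have hsum : G1.card + G2.card = n := by
      have h := Finset.card_filter_add_card_filter_not
        (s := (Finset.univ : Finset (Fin n))) (p := fun ℓ => (ℓ : ℕ) < n₁)
      rw [Finset.card_univ, Fintype.card_fin] at h
      exact h
    omega
  set μ : ℝ := (1 / (n : ℝ)) * ∑ m, x m with hμ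
  set S : ℝ := ∑ m, x m with hS
  set Q : ℝ := ∑ m, (x m) ^ 2 with hQ
  -- key identity: 2 n Σ (x - μ)² = Σℓ Σk (xℓ - xk)²
  have e1 : ∑ ℓ, (x ℓ - μ) ^ 2 = Q - 2 * μ * S + (n : ℝ) * μ ^ 2 := by
    have : ∀ ℓ : Fin n, (x ℓ - μ) ^ 2 = (x ℓ) ^ 2 - 2 * μ * x ℓ + μ ^ 2 := by
      intro ℓ; ring
    simp_rw [this]
    rw [Finset.sum_add_distrib, Finset.sum_sub_distrib, ← Finset.mul_sum,
      Finset.sum_const, Finset.card_univ, Fintype.card_fin, nsmul_eq_mul]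
  have e2 : ∑ ℓ, ∑ k, (x ℓ - x k) ^ 2 = 2 * (n : ℝ) * Q - 2 * S ^ 2 := by
    have inner : ∀ ℓ : Fin n, ∑ k, (x ℓ - x k) ^ 2
        = (n : ℝ) * (x ℓ) ^ 2 - 2 * x ℓ * S + Q := by
      intro ℓ
      have : ∀ k : Fin n, (x ℓ - x k) ^ 2 = (x ℓ) ^ 2 - 2 * x ℓ * x k + (x k) ^ 2 := by
        intro k; ring
      simp_rw [this]
      rw [Finset.sum_add_distrib, Finset.sum_sub_distrib, ← Finset.mul_sum,
        Finset.sum_const, Finset.card_univ, Fintype.card_fin, nsmul_eq_mul, hS, hQ]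
    simp_rw [inner]
    rw [Finset.sum_add_distrib, Finset.sum_sub_distrib, Finset.sum_const,
      Finset.card_univ, Fintype.card_fin, nsmul_eq_mul, ← Finset.mul_sum,
      ← Finset.sum_mul, ← Finset.mul_sum, hS, hQ]
    ring
  have hμS : (n : ℝ) * μ = S := by
    rw [hμ]; field_simp
  have key : 2 * (n : ℝ) * ∑ ℓ, (x ℓ - μ) ^ 2 = ∑ ℓ, ∑ k, (x ℓ - x k) ^ 2 := by
    rw [e1, e2]
    have : S = (n : ℝ) * μ := hμS.symm
    rw [this]; ring
  -- lower bound on the double sum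
  have nonneg : ∀ ℓ : Fin n, 0 ≤ ∑ k, (x ℓ - x k) ^ 2 := fun ℓ =>
    Finset.sum_nonneg fun k _ => sq_nonneg _
  have innonneg : ∀ (s : Finset (Fin n)) (ℓ : Fin n),
      (0:ℝ) ≤ ∑ k ∈ s, (x ℓ - x k) ^ 2 := fun s ℓ =>
    Finset.sum_nonneg fun k _ => sq_nonneg _
  have bound1 : (n₁ : ℝ) * n₂ * D ^ 2 ≤ ∑ ℓ ∈ G1, ∑ k ∈ G2, (x ℓ - x k) ^ 2 := by
    have : ∀ ℓ ∈ G1, (n₂ : ℝ) * D ^ 2 ≤ ∑ k ∈ G2, (x ℓ - x k) ^ 2 := by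
      intro ℓ hℓ
      have hℓ' : (ℓ : ℕ) < n₁ := by simpa [hG1] using hℓ
      calc (n₂ : ℝ) * D ^ 2 = ∑ _k ∈ G2, D ^ 2 := by
            rw [Finset.sum_const, cardG2, nsmul_eq_mul]
        _ ≤ ∑ k ∈ G2, (x ℓ - x k) ^ 2 := by
            apply Finset.sum_le_sum
            intro k hk
            exact pair ℓ k hℓ' (by simpa [hG2, not_lt] using hk)
    calc (n₁ : ℝ) * n₂ * D ^ 2 = ∑ _ℓ ∈ G1, (n₂ : ℝ) * D ^ 2 := by
          rw [Finset.sum_const, cardG1, nsmul_eq_mul]; ring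
      _ ≤ _ := Finset.sum_le_sum this
  have bound2 : (n₁ : ℝ) * n₂ * D ^ 2 ≤ ∑ ℓ ∈ G2, ∑ k ∈ G1, (x ℓ - x k) ^ 2 := by
    have : ∀ ℓ ∈ G2, (n₁ : ℝ) * D ^ 2 ≤ ∑ k ∈ G1, (x ℓ - x k) ^ 2 := by
      intro ℓ hℓ
      have hℓ' : n₁ ≤ (ℓ : ℕ) := by
        have := Finset.mem_filter.mp hℓ; omega
      calc (n₁ : ℝ) * D ^ 2 = ∑ _k ∈ G1, D ^ 2 := by
            rw [Finset.sum_const, cardG1, nsmul_eq_mul]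
        _ ≤ ∑ k ∈ G1, (x ℓ - x k) ^ 2 := by
            apply Finset.sum_le_sum
            intro k hk
            have hk' : (k : ℕ) < n₁ := by simpa [hG1] using hk
            have := pair k ℓ hk' hℓ'
            calc D ^ 2 ≤ (x k - x ℓ) ^ 2 := this
              _ = (x ℓ - x k) ^ 2 := by ring
    calc (n₁ : ℝ) * n₂ * D ^ 2 = ∑ _ℓ ∈ G2, (n₁ : ℝ) * D ^ 2 := by
          rw [Finset.sum_const, cardG2, nsmul_eq_mul]; ring
      _ ≤ _ := Finset.sum_le_sum this
  have split : ∑ ℓ, ∑ k, (x ℓ - x k) ^ 2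
      = ∑ ℓ ∈ G1, ∑ k, (x ℓ - x k) ^ 2 + ∑ ℓ ∈ G2, ∑ k, (x ℓ - x k) ^ 2 := by
    exact (Finset.sum_filter_add_sum_filter_not _ _ _).symm
  have split1 : ∀ ℓ : Fin n, ∑ k, (x ℓ - x k) ^ 2
      = ∑ k ∈ G1, (x ℓ - x k) ^ 2 + ∑ k ∈ G2, (x ℓ - x k) ^ 2 := fun ℓ =>
    (Finset.sum_filter_add_sum_filter_not _ _ _).symm
  have dbl : 2 * ((n₁ : ℝ) * n₂ * D ^ 2) ≤ ∑ ℓ, ∑ k, (x ℓ - x k) ^ 2 := by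
    rw [split]
    have a1 : ∑ ℓ ∈ G1, ∑ k ∈ G2, (x ℓ - x k) ^ 2 ≤ ∑ ℓ ∈ G1, ∑ k, (x ℓ - x k) ^ 2 := by
      apply Finset.sum_le_sum
      intro ℓ _
      rw [split1 ℓ]
      have := innonneg G1 ℓ
      linarith
    have a2 : ∑ ℓ ∈ G2, ∑ k ∈ G1, (x ℓ - x k) ^ 2 ≤ ∑ ℓ ∈ G2, ∑ k, (x ℓ - x k) ^ 2 := by
      apply Finset.sum_le_sum
      intro ℓ _
      rw [split1 ℓ]
      have := innonneg G2 ℓ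
      linarith
    linarith
  have final : (n₁ : ℝ) * n₂ * D ^ 2 / (n : ℝ) ≤ ∑ ℓ, (x ℓ - μ) ^ 2 := by
    rw [div_le_iff₀ hn0]
    nlinarith [key, dbl]
  calc ((n₁ : ℝ) * n₂ / (n : ℝ) ^ 2) * D ^ 2
      = (1 / (n : ℝ)) * ((n₁ : ℝ) * n₂ * D ^ 2 / (n : ℝ)) := by
        have hgen : ∀ a e : ℝ, a / (n : ℝ) ^ 2 * e = 1 / (n : ℝ) * (a * e / (n : ℝ)) := by
          intro a e; field_simp
        exact hgen _ _
    _ ≤ (1 / (n : ℝ)) * ∑ ℓ, (x ℓ - μ) ^ 2 :=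
        mul_le_mul_of_nonneg_left final (by positivity)
end

section
/- Let r ≥ 1, let b_1 < … < b_r be real numbers with Δ = min_{i≠j} |b_i − b_j| (Δ = +∞ if r = 1), and let δ, ε > 0 satisfy 2δ < ε and ε + 2δ ≤ Δ. Let x_1, …, x_p ∈ ℝ and σ : {1,…,p} → {1,…,r} be surjective with |x_ℓ − b_{σ(ℓ)}| ≤ δ for every ℓ, and set V_i = σ^{-1}(i) and p̂_i = |V_i|. Assume each p̂_i ≥ 2 and, listing the sizes in nondecreasing order p̂_(1) ≤ … ≤ p̂_(r), that p̂_(1) > p̂_(i+1) − p̂_(i) for every i = 1,…,r−1. Let θ_1 ≤ … ≤ θ_p be the ordered eigenvalues of the graph Laplacian of the ε-threshold graph G_ε on x_1, …, x_p. Then: (a) r̂ := argmax_{1≤ℓ≤p−1} (θ_{ℓ+1} − θ_ℓ) = r, uniquely; (b) the connected components of G_ε are exactly the blocks V_1, …, V_r; (c) for each i, the estimated mode mean_{ℓ ∈ V_i} x_ℓ satisfies |mean_{ℓ ∈ V_i} x_ℓ − b_i| ≤ δ, and the estimated probability p̂_i / p equals the exact proportion of indices assigned to b_i. -/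
open Polynomial Matrix Finset

open scoped Classical in
lemma aux_charpoly {p r : ℕ} (σ : Fin p → Fin r)
    (n : Fin r → ℕ) (hn : ∀ i, n i = (Finset.univ.filter fun ℓ => σ ℓ = i).card)
    (hn1 : ∀ i, 1 ≤ n i)
    (L : Matrix (Fin p) (Fin p) ℝ)
    (hL : L = Matrix.diagonal (fun ℓ => (n (σ ℓ) : ℝ)) -
      (Matrix.of fun ℓ i => if σ ℓ = i then (1:ℝ) else 0) *
      (Matrix.of fun (i : Fin r) (ℓ : Fin p) => if σ ℓ = i then (1:ℝ) else 0)) :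
    L.charpoly = ∏ i : Fin r, ((X : ℝ[X]) * (X - C (n i : ℝ)) ^ (n i - 1)) := by
  set K := RatFunc ℝ
  set φ : ℝ[X] →+* K := (algebraMap ℝ[X] K : ℝ[X] →+* K) with hφ
  have hinj : Function.Injective φ := IsFractionRing.injective ℝ[X] K
  apply hinj
  -- nonvanishing of the diagonal entries
  have hne : ∀ c : ℝ, φ (X - C c) ≠ 0 := by
    intro c h
    exact (X_sub_C_ne_zero c) (hinj (h.trans (map_zero φ).symm))
  -- the mapped charmatrix
  set U : Matrix (Fin p) (Fin r) K := Matrix.of fun ℓ i => if σ ℓ = i then (1:K) else 0 with hU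
  set W : Matrix (Fin r) (Fin p) K := Matrix.of fun i ℓ => if σ ℓ = i then (1:K) else 0 with hW
  set d : Fin p → K := fun ℓ => φ (X - C (n (σ ℓ) : ℝ)) with hd
  have hmap : (charmatrix L).map φ = Matrix.diagonal d + U * W := by
    ext ℓ ℓ'
    by_cases h : ℓ = ℓ'
    · subst h
      simp [charmatrix_apply_eq, hL, Matrix.map_apply, Matrix.mul_apply, hU, hW, hd,
        Matrix.diagonal_apply_eq, Matrix.sub_apply, Matrix.diagonal_apply_eq]
      ring
    · simp only [charmatrix_apply_ne _ _ _ h, Matrix.map_apply, hL, Matrix.sub_apply,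
        Matrix.diagonal_apply_ne _ h, Matrix.add_apply, Matrix.diagonal_apply_ne _ h,
        Matrix.mul_apply, hU, hW, Matrix.of_apply]
      rw [show (∑ i, (if σ ℓ = i then (1:K) else 0) * (if σ ℓ' = i then (1:K) else 0)) =
          ∑ i, (if σ ℓ = i then (if σ ℓ' = i then (1:K) else 0) else 0) by
        refine Finset.sum_congr rfl fun i _ => ?_; split <;> simp]
      rw [Finset.sum_ite_eq Finset.univ (σ ℓ) (fun i => if σ ℓ' = i then (1:K) else 0)]
      by_cases hσ : σ ℓ = σ ℓ' <;> simp [hσ, eq_comm]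
  have hdet : IsUnit (Matrix.diagonal d).det := by
    rw [Matrix.det_diagonal]
    exact isUnit_iff_ne_zero.mpr (Finset.prod_ne_zero_iff.mpr (fun ℓ _ => hne _))
  have hinv : (Matrix.diagonal d)⁻¹ = Matrix.diagonal (fun ℓ => (d ℓ)⁻¹) := by
    refine Matrix.inv_eq_right_inv ?_
    rw [Matrix.diagonal_mul_diagonal]
    rw [show (fun ℓ => d ℓ * (d ℓ)⁻¹) = fun _ => (1:K) from funext fun ℓ => mul_inv_cancel₀ (hne _)]
    exact Matrix.diagonal_one
  have hmid : (1 + W * (Matrix.diagonal d)⁻¹ * U) =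
      Matrix.diagonal (fun i => 1 + (n i : K) * (φ (X - C (n i : ℝ)))⁻¹) := by
    rw [hinv]
    ext i j
    rw [Matrix.add_apply, Matrix.mul_apply]
    have hterm : ∀ ℓ, (W * Matrix.diagonal fun ℓ' => (d ℓ')⁻¹) i ℓ * U ℓ j
        = if σ ℓ = i ∧ σ ℓ = j then (φ (X - C (n i : ℝ)))⁻¹ else 0 := by
      intro ℓ
      rw [Matrix.mul_diagonal]
      simp only [hW, hU, Matrix.of_apply, hd]
      rcases eq_or_ne (σ ℓ) i with h1 | h1
      · subst h1
        by_cases h2 : σ ℓ = j <;> simp [h2]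
      · by_cases h2 : σ ℓ = j
        · subst h2
          simp [h1, fun h : σ ℓ = σ ℓ => h1]
        · simp [h1, h2]
    rw [Finset.sum_congr rfl (fun ℓ _ => hterm ℓ)]
    by_cases hij : i = j
    · subst hij
      simp only [and_self, Matrix.diagonal_apply_eq]
      rw [Finset.sum_ite, Finset.sum_const, Finset.sum_const_zero, add_zero, ← hn i]
      rw [nsmul_eq_mul, Matrix.one_apply_eq]
    · have : ∀ ℓ, ¬ (σ ℓ = i ∧ σ ℓ = j) := by
        rintro ℓ ⟨h1, h2⟩; exact hij (h1 ▸ h2 ▸ rfl)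
      simp [this, Matrix.one_apply_ne hij, Matrix.diagonal_apply_ne _ hij]
  have hprod : ∏ ℓ, d ℓ = ∏ i, (φ (X - C (n i : ℝ)))^(n i) := by
    rw [← Finset.prod_fiberwise Finset.univ σ (fun ℓ => d ℓ)]
    refine Finset.prod_congr rfl fun i _ => ?_
    have h1 : ∀ ℓ ∈ Finset.univ.filter (fun ℓ => σ ℓ = i), d ℓ = φ (X - C (n i : ℝ)) := by
      intro ℓ hℓ
      simp only [Finset.mem_filter] at hℓ
      simp only [hd, hℓ.2]
    rw [Finset.prod_congr rfl h1, Finset.prod_const, ← hn i]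
  rw [Matrix.charpoly, RingHom.map_det, RingHom.mapMatrix_apply, hmap,
    Matrix.det_add_mul U W hdet, hmid, Matrix.det_diagonal, Matrix.det_diagonal, hprod,
    map_prod, ← Finset.prod_mul_distrib]
  refine Finset.prod_congr rfl fun i _ => ?_
  set c := φ (X - C (n i : ℝ)) with hc
  have hc0 : c ≠ 0 := hne _
  have hnK : ((n i : ℕ) : K) = φ X - c := by
    rw [hc, map_sub]
    rw [show C ((n i : ℕ) : ℝ) = ((n i : ℕ) : ℝ[X]) from by norm_cast, map_natCast]
    ring
  have hm : n i = (n i - 1) + 1 := (Nat.succ_pred_eq_of_pos (hn1 i)).symm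
  rw [_root_.map_mul φ, map_pow, ← hc]
  have hXK : φ X = c + (n i : K) := by rw [hnK]; ring
  rw [hXK, hnK]
  rw [hm, pow_succ]
  rw [Nat.add_sub_cancel]
  have hcc : (φ X - c) * c⁻¹ * c = φ X - c := inv_mul_cancel_right₀ hc0 _
  linear_combination (c ^ (n i - 1)) * hcc

lemma aux_roots (r : ℕ) (n : Fin r → ℕ) (hn1 : ∀ i, 1 ≤ n i) :
    (∏ i : Fin r, ((X:ℝ[X]) * (X - C (n i : ℝ)) ^ (n i - 1))).roots
      = Multiset.replicate r 0 + ∑ i : Fin r, Multiset.replicate (n i - 1) ((n i : ℕ) : ℝ) := by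
  have hfac : ∀ i : Fin r, ((X:ℝ[X]) * (X - C (n i : ℝ)) ^ (n i - 1)) ≠ 0 := by
    intro i
    exact mul_ne_zero X_ne_zero (pow_ne_zero _ (X_sub_C_ne_zero _))
  have hprod0 : (∏ i : Fin r, ((X:ℝ[X]) * (X - C (n i : ℝ)) ^ (n i - 1))) ≠ 0 :=
    Finset.prod_ne_zero_iff.mpr fun i _ => hfac i
  rw [Polynomial.roots_prod _ _ hprod0]
  have : ∀ i : Fin r, ((X:ℝ[X]) * (X - C (n i : ℝ)) ^ (n i - 1)).roots
      = ({0} : Multiset ℝ) + Multiset.replicate (n i - 1) ((n i : ℕ) : ℝ) := by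
    intro i
    rw [Polynomial.roots_mul (hfac i), Polynomial.roots_X, Polynomial.roots_pow,
      Polynomial.roots_X_sub_C, Multiset.nsmul_singleton]
  have hbind : (Finset.univ.val.bind fun i => ((X:ℝ[X]) * (X - C (n i : ℝ)) ^ (n i - 1)).roots)
      = ∑ i : Fin r, (({0} : Multiset ℝ) + Multiset.replicate (n i - 1) ((n i : ℕ) : ℝ)) := by
    have hsb : ∀ g : Fin r → Multiset ℝ, Finset.univ.val.bind g = ∑ i : Fin r, g i := by
      intro g; rfl
    rw [hsb]
    exact Finset.sum_congr rfl fun i _ => this i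
  rw [hbind, Finset.sum_add_distrib]
  congr 1
  rw [Finset.sum_const, Multiset.nsmul_singleton, Finset.card_univ, Fintype.card_fin]


open scoped Classical in
/-- Deterministic skeleton of the consistency of the HDεES subroutine: on the event
where each `x ℓ` lies within `δ` of its mode `b (σ ℓ)`, with `2δ < ε` and
`ε + 2δ ≤ Δ_min`, the ε-threshold graph has the fibers of `σ` as connected
components, the spectral gap of its Laplacian is uniquely maximised at position `r`
(so the gap estimator recovers `r`), cluster means are within `δ` of the modes, and
the estimated probabilities equal the exact proportions. -/
theorem stmt12 (r p : ℕ) (hr : 0 < r) (b : Fin r → ℝ) (hb : StrictMono b)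
    (δ ε : ℝ) (hδ : 0 < δ) (hε : 0 < ε) (hδε : 2 * δ < ε)
    (hΔ : ∀ i j : Fin r, i ≠ j → ε + 2 * δ ≤ |b i - b j|)
    (x : Fin p → ℝ) (σ : Fin p → Fin r) (hσ : Function.Surjective σ)
    (hx : ∀ ℓ, |x ℓ - b (σ ℓ)| ≤ δ)
    (V : Fin r → Finset (Fin p)) (hV : ∀ i ℓ, ℓ ∈ V i ↔ σ ℓ = i)
    (phat : Fin r → ℕ) (hphat : ∀ i, phat i = (V i).card)
    (hp2 : ∀ i, 2 ≤ phat i)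
    (q : Fin r → ℕ) (τ : Equiv.Perm (Fin r)) (hq : ∀ i, q i = phat (τ i))
    (hqmono : Monotone q)
    (hgap : ∀ i j : Fin r, (i : ℕ) + 1 = (j : ℕ) → q j - q i < q ⟨0, hr⟩)
    (Gε : SimpleGraph (Fin p))
    (hGε : Gε = SimpleGraph.fromRel (fun m m' => |x m - x m'| < ε))
    (θ : ℕ → ℝ)
    (hθmono : ∀ k l, k ≤ l → l < p → θ k ≤ θ l)
    (henum : (Finset.range p).val.map θ = (Gε.lapMatrix ℝ).charpoly.roots) :
    (∀ ℓ : ℕ, 1 ≤ ℓ → ℓ ≤ p - 1 → ℓ ≠ r →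
      θ ℓ - θ (ℓ - 1) < θ r - θ (r - 1)) ∧
    (∀ ℓ ℓ' : Fin p, Gε.Reachable ℓ ℓ' ↔ σ ℓ = σ ℓ') ∧
    (∀ i : Fin r,
      |((phat i : ℝ))⁻¹ * ∑ ℓ ∈ V i, x ℓ - b i| ≤ δ ∧
      (phat i : ℝ) / p = ((Finset.univ.filter fun ℓ => σ ℓ = i).card : ℝ) / p) := by
    -- adjacency characterisation
  have hAdj : ∀ m m' : Fin p, Gε.Adj m m' ↔ (m ≠ m' ∧ σ m = σ m') := by
    intro m m'
    have hiff : |x m - x m'| < ε ↔ σ m = σ m' := by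
      constructor
      · intro h
        by_contra hne
        have h1 := hΔ (σ m) (σ m') hne
        have h2 : |b (σ m) - b (σ m')| ≤ |x m - b (σ m)| + |x m - x m'| + |x m' - b (σ m')| := by
          have : b (σ m) - b (σ m') = -(x m - b (σ m)) + (x m - x m') + (x m' - b (σ m')) := by ring
          rw [this]
          calc |(-(x m - b (σ m)) + (x m - x m')) + (x m' - b (σ m'))|
              ≤ |(-(x m - b (σ m)) + (x m - x m'))| + |x m' - b (σ m')| := abs_add_le _ _
            _ ≤ |(-(x m - b (σ m)))| + |x m - x m'| + |x m' - b (σ m')| := by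
                gcongr; exact abs_add_le _ _
            _ = |x m - b (σ m)| + |x m - x m'| + |x m' - b (σ m')| := by rw [abs_neg]
        have := hx m
        have := hx m'
        linarith
      · intro h
        have h1 := hx m
        have h2 := hx m'
        rw [h] at h1
        calc |x m - x m'| = |(x m - b (σ m')) - (x m' - b (σ m'))| := by ring_nf
          _ ≤ |x m - b (σ m')| + |x m' - b (σ m')| := abs_sub _ _
          _ ≤ δ + δ := by gcongr
          _ < ε := by linarith
    subst hGε
    rw [SimpleGraph.fromRel_adj]
    constructor
    · rintro ⟨hne, h | h⟩
      · exact ⟨hne, hiff.mp h⟩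
      · exact ⟨hne, (hiff.mp (by rwa [abs_sub_comm] at h))⟩
    · rintro ⟨hne, h⟩
      exact ⟨hne, Or.inl (hiff.mpr h)⟩
  -- reachability
  have hreach : ∀ ℓ ℓ' : Fin p, Gε.Reachable ℓ ℓ' ↔ σ ℓ = σ ℓ' := by
    intro ℓ ℓ'
    constructor
    · rintro ⟨w⟩
      induction w with
      | nil => rfl
      | cons h w ih => exact ((hAdj _ _).mp h).2.trans ih
    · intro h
      by_cases hmm : ℓ = ℓ'
      · subst hmm; exact SimpleGraph.Reachable.refl _
      · exact ((hAdj ℓ ℓ').mpr ⟨hmm, h⟩).reachable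
  -- fibers
  have hfib : ∀ i, (Finset.univ.filter fun ℓ => σ ℓ = i) = V i := by
    intro i
    ext ℓ
    simp [hV i ℓ]
  have hn : ∀ i, phat i = (Finset.univ.filter fun ℓ => σ ℓ = i).card := by
    intro i; rw [hfib, hphat]
  have hn1 : ∀ i, 1 ≤ phat i := fun i => le_trans (by norm_num) (hp2 i)
  -- lapMatrix identification
  have hmem : ∀ ℓ : Fin p, ℓ ∈ V (σ ℓ) := fun ℓ => (hV (σ ℓ) ℓ).mpr rfl
  have hdeg : ∀ ℓ : Fin p, Gε.degree ℓ = phat (σ ℓ) - 1 := by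
    intro ℓ
    have : Gε.neighborFinset ℓ = (V (σ ℓ)).erase ℓ := by
      ext m
      rw [SimpleGraph.mem_neighborFinset, hAdj ℓ m, Finset.mem_erase, hV]
      constructor
      · rintro ⟨h1, h2⟩; exact ⟨fun h => h1 h.symm, h2.symm⟩
      · rintro ⟨h1, h2⟩; exact ⟨fun h => h1 h.symm, h2.symm⟩
    rw [SimpleGraph.degree, this, Finset.card_erase_of_mem (hmem ℓ), hphat]
  have hL : Gε.lapMatrix ℝ = Matrix.diagonal (fun ℓ => (phat (σ ℓ) : ℝ)) -
      (Matrix.of fun ℓ i => if σ ℓ = i then (1:ℝ) else 0) *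
      (Matrix.of fun (i : Fin r) (ℓ : Fin p) => if σ ℓ = i then (1:ℝ) else 0) := by
    have hUW : ∀ ℓ m : Fin p,
        ((Matrix.of fun ℓ i => if σ ℓ = i then (1:ℝ) else 0) *
        (Matrix.of fun (i : Fin r) (ℓ : Fin p) => if σ ℓ = i then (1:ℝ) else 0)) ℓ m
        = if σ ℓ = σ m then 1 else 0 := by
      intro ℓ m
      rw [Matrix.mul_apply]
      rw [show (∑ i, (Matrix.of fun ℓ i => if σ ℓ = i then (1:ℝ) else 0) ℓ i *
          (Matrix.of fun (i : Fin r) (ℓ : Fin p) => if σ ℓ = i then (1:ℝ) else 0) i m) =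
          ∑ i, (if σ ℓ = i then (if σ m = i then (1:ℝ) else 0) else 0) from
        Finset.sum_congr rfl fun i _ => by simp only [Matrix.of_apply]; split <;> simp]
      rw [Finset.sum_ite_eq Finset.univ (σ ℓ) (fun i => if σ m = i then (1:ℝ) else 0)]
      simp [eq_comm]
    ext ℓ m
    rw [SimpleGraph.lapMatrix, Matrix.sub_apply, Matrix.sub_apply, hUW]
    by_cases h : ℓ = m
    · subst h
      rw [SimpleGraph.degMatrix, Matrix.diagonal_apply_eq, Matrix.diagonal_apply_eq,
        SimpleGraph.adjMatrix_apply, hdeg ℓ]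
      have : ¬ Gε.Adj ℓ ℓ := Gε.loopless.irrefl ℓ
      rw [if_neg this, if_pos rfl, Nat.cast_sub (hn1 (σ ℓ))]
      norm_num
    · rw [SimpleGraph.degMatrix, Matrix.diagonal_apply_ne _ h, Matrix.diagonal_apply_ne _ h,
        SimpleGraph.adjMatrix_apply, hAdj]
      by_cases hs : σ ℓ = σ m
      · simp [h, hs]
      · simp [h, hs]
  -- the roots of the characteristic polynomial
  have hchar := aux_charpoly σ phat hn hn1 _ hL
  have hroots : (Gε.lapMatrix ℝ).charpoly.roots
      = Multiset.replicate r 0 + ∑ i : Fin r, Multiset.replicate (q i - 1) ((q i : ℕ) : ℝ) := by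
    rw [hchar, aux_roots r phat hn1]
    congr 1
    exact (Fintype.sum_equiv τ
      (fun i => Multiset.replicate (q i - 1) ((q i : ℕ) : ℝ))
      (fun j => Multiset.replicate (phat j - 1) ((phat j : ℕ) : ℝ))
      (fun i => by rw [hq i])).symm
  -- θ analysis
  set i0 : Fin r := ⟨0, hr⟩ with hi0
  set N : Multiset ℝ := ∑ i : Fin r, Multiset.replicate (q i - 1) ((q i : ℕ) : ℝ) with hN
  have hq2 : ∀ i, 2 ≤ q i := fun i => (hq i) ▸ hp2 (τ i)
  have hM : (Finset.range p).val.map θ = Multiset.replicate r 0 + N := by rw [henum, hroots]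
  have hθmem : ∀ k, k < p → θ k ∈ Multiset.replicate r 0 + N := by
    intro k hk
    rw [← hM]
    exact Multiset.mem_map_of_mem θ (by simpa using hk)
  have hNval : ∀ a ∈ N, ∃ i : Fin r, a = ((q i : ℕ) : ℝ) := by
    intro a ha
    rw [hN] at ha
    obtain ⟨i, -, hi⟩ := Multiset.mem_sum.mp ha
    exact ⟨i, (Multiset.eq_of_mem_replicate hi)⟩
  have hqN : ∀ i : Fin r, ((q i : ℕ) : ℝ) ∈ N := by
    intro i
    rw [hN]
    refine Multiset.mem_sum.mpr ⟨i, Finset.mem_univ i, Multiset.mem_replicate.mpr ⟨?_, rfl⟩⟩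
    have := hq2 i; omega
  have hsurj : ∀ a ∈ Multiset.replicate r 0 + N, ∃ k, k < p ∧ θ k = a := by
    intro a ha
    rw [← hM] at ha
    obtain ⟨k, hk, rfl⟩ := Multiset.mem_map.mp ha
    exact ⟨k, by simpa using hk, rfl⟩
  have hrp : r < p := by
    have hcd := congrArg Multiset.card hM
    rw [Multiset.card_map, Multiset.card_add, Multiset.card_replicate] at hcd
    have hcd' : p = r + Multiset.card N := (Finset.card_range p).symm.trans hcd
    have : 0 < Multiset.card N := Multiset.card_pos.mpr (fun h => by
      have := hqN i0; rw [h] at this; exact absurd this (Multiset.notMem_zero _))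
    omega
  have hcount : ((Finset.range p).filter (fun k => θ k < 1)).card = r := by
    have h1 := congrArg (Multiset.countP (fun a : ℝ => a < 1)) hM
    rw [Multiset.countP_map, Multiset.countP_add] at h1
    have hz : Multiset.countP (fun a : ℝ => a < 1) (Multiset.replicate r 0) = r := by
      rw [Multiset.countP_eq_card.mpr, Multiset.card_replicate]
      intro a ha; rw [Multiset.eq_of_mem_replicate ha]; norm_num
    have hze : Multiset.countP (fun a : ℝ => a < 1) N = 0 := by
      refine Multiset.countP_eq_zero.mpr ?_
      intro a ha
      obtain ⟨i, rfl⟩ := hNval a ha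
      have h2 : (2:ℝ) ≤ ((q i : ℕ) : ℝ) := by exact_mod_cast hq2 i
      push_neg
      linarith
    rw [hz, hze, add_zero] at h1
    rw [← h1]
    rfl
  have hlt : ∀ k, k < p → (θ k < 1 ↔ k < r) := by
    intro k hk
    constructor
    · intro h
      by_contra hkr
      push_neg at hkr
      have hsub : Finset.range (k+1) ⊆ (Finset.range p).filter (fun j => θ j < 1) := by
        intro j hj
        rw [Finset.mem_range] at hj
        rw [Finset.mem_filter, Finset.mem_range]
        have hjk : j ≤ k := Nat.lt_succ_iff.mp hj
        exact ⟨lt_of_le_of_lt hjk hk, lt_of_le_of_lt (hθmono j k hjk hk) h⟩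
      have := Finset.card_le_card hsub
      rw [Finset.card_range, hcount] at this
      omega
    · intro hkr
      by_contra h
      push_neg at h
      have hsub : (Finset.range p).filter (fun j => θ j < 1) ⊆ Finset.range k := by
        intro j hj
        rw [Finset.mem_filter, Finset.mem_range] at hj
        rw [Finset.mem_range]
        by_contra hjk
        push_neg at hjk
        have := hθmono k j hjk hj.1
        linarith [hj.2]
      have := Finset.card_le_card hsub
      rw [Finset.card_range, hcount] at this
      omega
  have hθ0 : ∀ k, k < r → θ k = 0 := by
    intro k hk
    have hkp : k < p := lt_trans hk hrp
    rcases Multiset.mem_add.mp (hθmem k hkp) with h | h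
    · exact Multiset.eq_of_mem_replicate h
    · exfalso
      obtain ⟨i, hi⟩ := hNval _ h
      have h1 := (hlt k hkp).mpr hk
      have h2 : (2:ℝ) ≤ ((q i : ℕ) : ℝ) := by exact_mod_cast hq2 i
      rw [hi] at h1
      linarith
  have hθq : ∀ k, r ≤ k → k < p → ∃ i : Fin r, θ k = ((q i : ℕ) : ℝ) := by
    intro k hk hkp
    rcases Multiset.mem_add.mp (hθmem k hkp) with h | h
    · exfalso
      have h0 := Multiset.eq_of_mem_replicate h
      have := (hlt k hkp).mp (by rw [h0]; norm_num)
      omega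
    · obtain ⟨i, hi⟩ := hNval _ h
      exact ⟨i, hi⟩
  have hθge : ∀ k, r ≤ k → k < p → (1:ℝ) ≤ θ k := by
    intro k hk hkp
    by_contra h
    push_neg at h
    have := (hlt k hkp).mp h
    omega
  have hθr : θ r = ((q i0 : ℕ) : ℝ) := by
    apply le_antisymm
    · obtain ⟨k, hkp, hθk⟩ := hsurj _ (Multiset.mem_add.mpr (Or.inr (hqN i0)))
      have hk : r ≤ k := by
        by_contra hc
        push_neg at hc
        have h1 := (hlt k hkp).mpr hc
        have h2 : (2:ℝ) ≤ ((q i0 : ℕ) : ℝ) := by exact_mod_cast hq2 i0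
        rw [hθk] at h1
        linarith
      rw [← hθk]
      exact hθmono r k hk hkp
    · obtain ⟨i, hi⟩ := hθq r le_rfl hrp
      rw [hi]
      exact_mod_cast hqmono (show i0 ≤ i from (Fin.le_def).mpr (Nat.zero_le _))
  have hθr1 : θ (r - 1) = 0 := hθ0 (r-1) (by omega)
  refine ⟨?_, hreach, ?_⟩
  · -- spectral gap
    intro ℓ h1 h2 h3
    have hℓp : ℓ < p := by omega
    have hq0R : (2:ℝ) ≤ ((q i0 : ℕ) : ℝ) := by exact_mod_cast hq2 i0
    rw [hθr, hθr1, sub_zero]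
    rcases Nat.lt_or_ge ℓ r with hc | hc
    · rw [hθ0 ℓ hc, hθ0 (ℓ-1) (by omega)]
      linarith
    · have hcc : r < ℓ := by omega
      have hℓ1p : ℓ - 1 < p := by omega
      have hrℓ1 : r ≤ ℓ - 1 := by omega
      obtain ⟨a, ha⟩ := hθq (ℓ-1) hrℓ1 hℓ1p
      obtain ⟨b', hb'⟩ := hθq ℓ (by omega) hℓp
      have hmono1 : θ (ℓ-1) ≤ θ ℓ := hθmono (ℓ-1) ℓ (by omega) hℓp
      rcases eq_or_lt_of_le hmono1 with he | hlt2
      · rw [← he]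
        linarith
      · set T := Finset.univ.filter (fun i : Fin r => ((q i : ℕ) : ℝ) ≤ θ (ℓ-1)) with hT
        have hTne : T.Nonempty := ⟨a, by simp [hT, ha.symm.le]⟩
        set a' := T.max' hTne with ha'def
        have ha' : ((q a' : ℕ) : ℝ) ≤ θ (ℓ-1) := (Finset.mem_filter.mp (T.max'_mem hTne)).2
        have ha'b : (a' : ℕ) < (b' : ℕ) := by
          by_contra hcon
          push_neg at hcon
          have : q b' ≤ q a' := hqmono (show b' ≤ a' from (Fin.le_def).mpr hcon)
          have : ((q b' : ℕ) : ℝ) ≤ ((q a' : ℕ) : ℝ) := by exact_mod_cast this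
          rw [← hb'] at this
          linarith
        have hjlt : (a' : ℕ) + 1 < r := by
          have := b'.isLt
          omega
        set j : Fin r := ⟨(a' : ℕ) + 1, hjlt⟩ with hj
        have hjT : j ∉ T := by
          intro hmem
          have h := T.le_max' j hmem
          rw [Fin.le_def] at h
          have h2 : (a' : ℕ) + 1 ≤ (a' : ℕ) := h
          omega
        have hθj : θ (ℓ-1) < ((q j : ℕ) : ℝ) := by
          by_contra hcon
          push_neg at hcon
          exact hjT (Finset.mem_filter.mpr ⟨Finset.mem_univ _, hcon⟩)
        obtain ⟨m, hmp, hθm⟩ := hsurj _ (Multiset.mem_add.mpr (Or.inr (hqN j)))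
        have hmℓ : ℓ ≤ m := by
          by_contra hcon
          push_neg at hcon
          have : θ m ≤ θ (ℓ-1) := hθmono m (ℓ-1) (by omega) hℓ1p
          rw [hθm] at this
          linarith
        have hθℓj : θ ℓ ≤ ((q j : ℕ) : ℝ) := by
          rw [← hθm]
          exact hθmono ℓ m hmℓ hmp
        have hgapj := hgap a' j rfl
        have hqa'j : q a' ≤ q j := hqmono (show a' ≤ j from (Fin.le_def).mpr (by simp [hj]))
        have hcast : ((q j : ℕ) : ℝ) - ((q a' : ℕ) : ℝ) < ((q i0 : ℕ) : ℝ) := by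
          have : ((q j - q a' : ℕ) : ℝ) < ((q i0 : ℕ) : ℝ) := by exact_mod_cast hgapj
          rwa [Nat.cast_sub hqa'j] at this
        linarith
  · -- means and probabilities
    intro i
    have hVcard : (V i).card = phat i := (hphat i).symm
    have hpos : (0:ℝ) < (phat i : ℝ) := by
      have := hp2 i
      exact_mod_cast Nat.lt_of_lt_of_le Nat.zero_lt_two this
    constructor
    · have hsum : |∑ ℓ ∈ V i, x ℓ - (phat i : ℝ) * b i| ≤ (phat i : ℝ) * δ := by
        have heq : ∑ ℓ ∈ V i, x ℓ - (phat i:ℝ) * b i = ∑ ℓ ∈ V i, (x ℓ - b i) := by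
          rw [Finset.sum_sub_distrib, Finset.sum_const, hVcard, nsmul_eq_mul]
        rw [heq]
        calc |∑ ℓ ∈ V i, (x ℓ - b i)| ≤ ∑ ℓ ∈ V i, |x ℓ - b i| :=
              Finset.abs_sum_le_sum_abs _ _
          _ ≤ ∑ ℓ ∈ V i, δ := Finset.sum_le_sum (fun ℓ hℓ => by
              rw [← (hV i ℓ).mp hℓ]; exact hx ℓ)
          _ = (phat i:ℝ) * δ := by rw [Finset.sum_const, hVcard, nsmul_eq_mul]
      have heq2 : (phat i:ℝ)⁻¹ * ∑ ℓ ∈ V i, x ℓ - b i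
          = (phat i:ℝ)⁻¹ * (∑ ℓ ∈ V i, x ℓ - (phat i:ℝ) * b i) := by
        field_simp
      rw [heq2, abs_mul, abs_inv, abs_of_pos hpos]
      calc (phat i:ℝ)⁻¹ * |∑ ℓ ∈ V i, x ℓ - (phat i:ℝ) * b i|
          ≤ (phat i:ℝ)⁻¹ * ((phat i:ℝ) * δ) := by gcongr
        _ = δ := by field_simp
    · rw [hfib i, hphat i]
end
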